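/- Let N ∈ ℕ and let z ∈ ℂ∖{0}. Work in the ring R = ℂ[x]/(x^{N+1}) and in formal power series R[[Q]]. For each r ≥ 1, the element x̄ + rz of R is invertible (its scalar part rz is nonzero). Define g ∈ R[[Q]] whose d-th coefficient is ∏_{r=1}^d (x̄ + rz)^{−(N+1)}. Then g satisfies (x̄·Id + z·D)^{N+1}(g) = Q·g, where the operator is the (N+1)-st iterate of the R-linear endomorphism f ↦ x̄·f + z·D(f) of R[[Q]]. (This is the differential equation (zQ∂_Q)^{N+1}J = QJ satisfied by Givental's small (non-equivariant) cohomological J-function of ℙ^N, rewritten in the cohomology ring H^*(ℙ^N;ℂ) ≅ ℂ[x]/(x^{N+1}) with H = x̄, after removing the prefactor Q^{H/z}.) -/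

import Mathlib

/-!
The operator `f ↦ a f + c D f` (here `a = x̄`, `c = z`, `n = N + 1`) is diagonal in the
monomial basis: it multiplies the `d`-th coefficient by `a + d c`, so its `n`-th iterate
multiplies it by `(a + d c)^n`. The coefficients `g_d = ∏_{r ≤ d} (a + r c)^{-n}` are built so
that this turns `g_d` into `g_{d-1}`, i.e. into the `d`-th coefficient of `Q g`, while at `d = 0`
it gives `a^n g_0 = 0` because `x̄^{N+1} = 0`.
-/

open Complex PowerSeries

/-- The ring `R = ℂ[x]/(x^{N+1})`, a model for `H^*(ℙ^N;ℂ)`. -/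
abbrev KRing (N : ℕ) : Type := AdjoinRoot ((Polynomial.X : Polynomial ℂ) ^ (N + 1))

noncomputable def xbar (N : ℕ) : KRing N := AdjoinRoot.root _

section EulerOperator

variable {R : Type*} [CommRing R]

noncomputable def eulerOp (a c : R) (f : R⟦X⟧) : R⟦X⟧ :=
  C a * f + C c * mk fun d => (d : R) * coeff d f

theorem coeff_iterate_eulerOp (a c : R) (k d : ℕ) (f : R⟦X⟧) :
    coeff d ((eulerOp a c)^[k] f) = (a + d * c) ^ k * coeff d f := by
  induction k with
  | zero => simp
  | succ k ih =>
    rw [Function.iterate_succ_apply', eulerOp]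
    simp only [map_add, coeff_C_mul, coeff_mk, ih]
    ring

theorem iterate_eulerOp_mk_inverse_prod {a c : R} {n : ℕ} (ha : a ^ n = 0)
    (hunit : ∀ r : ℕ, 1 ≤ r → IsUnit (a + r * c)) :
    (eulerOp a c)^[n] (mk fun d => Ring.inverse ((∏ r ∈ Finset.Icc 1 d, (a + r * c)) ^ n)) =
      X * mk fun d => Ring.inverse ((∏ r ∈ Finset.Icc 1 d, (a + r * c)) ^ n) := by
  ext d
  rw [coeff_iterate_eulerOp]
  cases d with
  | zero => simp [ha]
  | succ d =>
    have hlast : IsUnit ((a + ((d + 1 : ℕ) : R) * c) ^ n) := (hunit (d + 1) d.succ_pos).pow n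
    rw [coeff_succ_X_mul, coeff_mk, coeff_mk, Finset.prod_Icc_succ_top d.succ_pos, mul_pow,
      Ring.mul_inverse_rev, ← mul_assoc, Ring.mul_inverse_cancel _ hlast, one_mul]

end EulerOperator

theorem xbar_pow_succ (N : ℕ) : xbar N ^ (N + 1) = 0 := by
  simpa [xbar] using AdjoinRoot.eval₂_root ((Polynomial.X : Polynomial ℂ) ^ (N + 1))

theorem isUnit_xbar_add_algebraMap (N : ℕ) {w : ℂ} (hw : w ≠ 0) :
    IsUnit (xbar N + algebraMap ℂ (KRing N) w) :=
  IsNilpotent.isUnit_add_right_of_commute ⟨N + 1, xbar_pow_succ N⟩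
    ((isUnit_iff_ne_zero.mpr hw).map _) (Commute.all _ _)

/-- In `R = ℂ[x]/(x^{N+1})`: each `x̄ + rz` (for `r ≥ 1`) is invertible, and
`g = Σ_d Q^d ∏_{r=1}^d (x̄ + rz)^{-(N+1)} ∈ R[[Q]]` satisfies the differential equation
`(x̄·Id + z·D)^{N+1} g = Q·g`, where `D = Q·d/dQ`.  (This is the differential equation
satisfied by Givental's small non-equivariant cohomological J-function of `ℙ^N`, with
`H = x̄`, after removing the prefactor `Q^{H/z}`.) -/
theorem stmt11 (N : ℕ) (z : ℂ) (hz : z ≠ 0) :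
    (∀ r : ℕ, 1 ≤ r →
      IsUnit (xbar N + algebraMap ℂ (KRing N) (r * z))) ∧
    (fun f : PowerSeries (KRing N) =>
        PowerSeries.C (xbar N) * f +
          PowerSeries.C (algebraMap ℂ (KRing N) z) *
            PowerSeries.mk fun d => (d : KRing N) * PowerSeries.coeff d f)^[N + 1]
      (PowerSeries.mk fun d => Ring.inverse
        ((∏ r ∈ Finset.Icc 1 d, (xbar N + algebraMap ℂ (KRing N) (r * z))) ^ (N + 1))) =
    PowerSeries.X *
      PowerSeries.mk fun d => Ring.inverse
        ((∏ r ∈ Finset.Icc 1 d, (xbar N + algebraMap ℂ (KRing N) (r * z))) ^ (N + 1)) := by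
  have hunit : ∀ r : ℕ, 1 ≤ r → IsUnit (xbar N + algebraMap ℂ (KRing N) (r * z)) :=
    fun r hr => isUnit_xbar_add_algebraMap N (mul_ne_zero (Nat.cast_ne_zero.mpr (by omega)) hz)
  refine ⟨hunit, ?_⟩
  simp only [map_mul, map_natCast] at hunit ⊢
  exact iterate_eulerOp_mk_inverse_prod (xbar_pow_succ N) hunit
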